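/- Let n ≥ 2, let E be a real inner product space of dimension n, let f : E → ℝ be any function and g ∈ E any vector, and let a₁, …, a_{n+1} ∈ E be affinely independent. For 1 ≤ i ≤ n−1 let āᵢ be the reflection of aᵢ across the affine span of a_{i+1}, …, a_{n+1}, and set r̄ = Σ_{i=1}^{n−1} ((f(āᵢ) − f(aᵢ))/‖āᵢ − aᵢ‖²) • (āᵢ − aᵢ) + ((f(a_{n+1}) − f(aₙ))/‖a_{n+1} − aₙ‖²) • (a_{n+1} − aₙ). Then ‖r̄ − g‖ ≤ Σ_{i=1}^{n−1} |f(āᵢ) − f(aᵢ) − ⟪g, āᵢ − aᵢ⟫| / ‖āᵢ − aᵢ‖ + |f(a_{n+1}) − f(aₙ) − ⟪g, a_{n+1} − aₙ⟫| / ‖a_{n+1} − aₙ‖. -/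

import Mathlib

/-! The vectors `āᵢ - aᵢ` and `a_{n+1} - aₙ` are pairwise orthogonal, since `āᵢ - aᵢ` is normal
to the affine span of `a_{i+1}, …, a_{n+1}`, which contains every later vector of the family.
They are nonzero by affine independence and there are `n = dim E` of them, so their
normalisations form an orthonormal basis of `E`. In this basis the coordinates of `r̄ - g` are
`(f āᵢ - f aᵢ - ⟪g, āᵢ - aᵢ⟫) / ‖āᵢ - aᵢ‖` (and likewise for the last vector), and the triangle
inequality gives the bound. -/

open EuclideanGeometry
open scoped InnerProductSpace

/-- Orthogonal reflection of the point `p` across the affine span of the set `s`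
(Mathlib's `EuclideanGeometry.reflection`), extended by the identity if `s` is empty. -/
noncomputable def mirror {E : Type*} [NormedAddCommGroup E] [InnerProductSpace ℝ E]
    [FiniteDimensional ℝ E] (s : Set E) (p : E) : E :=
  open scoped Classical in
  if hs : s.Nonempty then
    haveI : Nonempty (affineSpan ℝ s) := ((affineSpan_nonempty ℝ (s := s)).mpr hs).to_subtype
    EuclideanGeometry.reflection (affineSpan ℝ s) p
  else p

/-- Given points `a 0, …, a n` (the paper's `a₁, …, a_{n+1}`), `mirrored n a i` (for
`i : Fin (n-1)`, the paper's index `i+1 ∈ {1, …, n−1}`) is the reflection of the point `a i`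
across the affine span of the points `a j`, `j > i`. -/
noncomputable def mirrored {E : Type*} [NormedAddCommGroup E] [InnerProductSpace ℝ E]
    [FiniteDimensional ℝ E] (n : ℕ) (a : Fin (n + 1) → E) (i : Fin (n - 1)) : E :=
  mirror (a '' {j | Fin.castLE (by omega) i < j}) (a (Fin.castLE (by omega) i))

section OrthogonalExpansion

variable {ι E : Type*} [NormedAddCommGroup E] [InnerProductSpace ℝ E]

theorem OrthonormalBasis.norm_sum_smul_sub_le [Fintype ι] (b : OrthonormalBasis ι ℝ E)
    (c : ι → ℝ) (g : E) :
    ‖∑ i, c i • b i - g‖ ≤ ∑ i, |c i - ⟪b i, g⟫_ℝ| :=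
  calc ‖∑ i, c i • b i - g‖ = ‖∑ i, (c i - ⟪b i, g⟫_ℝ) • b i‖ := by
        conv_lhs => rw [← b.sum_repr' g]
        simp only [sub_smul, Finset.sum_sub_distrib]
    _ ≤ ∑ i, ‖(c i - ⟪b i, g⟫_ℝ) • b i‖ := norm_sum_le _ _
    _ = ∑ i, |c i - ⟪b i, g⟫_ℝ| := by simp [norm_smul]

theorem orthonormal_inv_norm_smul {v : ι → E} (hv0 : ∀ i, v i ≠ 0)
    (hv : Pairwise fun i j => ⟪v i, v j⟫_ℝ = 0) : Orthonormal ℝ fun i => ‖v i‖⁻¹ • v i :=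
  ⟨fun i => norm_smul_inv_norm (hv0 i), fun i j hij => by
    simp only [real_inner_smul_left, real_inner_smul_right, hv hij, mul_zero]⟩

theorem norm_sum_div_sq_smul_sub_le [Fintype ι] [FiniteDimensional ℝ E] {v : ι → E}
    (hv0 : ∀ i, v i ≠ 0) (hv : Pairwise fun i j => ⟪v i, v j⟫_ℝ = 0)
    (hcard : Fintype.card ι = Module.finrank ℝ E) (d : ι → ℝ) (g : E) :
    ‖∑ i, (d i / ‖v i‖ ^ 2) • v i - g‖ ≤ ∑ i, |d i - ⟪g, v i⟫_ℝ| / ‖v i‖ := by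
  have hu := orthonormal_inv_norm_smul hv0 hv
  let b := OrthonormalBasis.mk hu (hu.linearIndependent.span_eq_top_of_card_eq_finrank' hcard).ge
  convert b.norm_sum_smul_sub_le (fun i => d i / ‖v i‖) g using 3 with i - i
  · simp only [b, OrthonormalBasis.coe_mk, smul_smul]
    congr 1
    field_simp
  · rw [OrthonormalBasis.coe_mk, real_inner_smul_left, real_inner_comm g, ← div_eq_inv_mul,
      div_sub_div_same, abs_div, abs_norm]

end OrthogonalExpansion

section Mirror

variable {E : Type*} [NormedAddCommGroup E] [InnerProductSpace ℝ E] [FiniteDimensional ℝ E]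

theorem mirror_eq_reflection {s : Set E} (hs : s.Nonempty) [Nonempty (affineSpan ℝ s)] (p : E) :
    mirror s p = reflection (affineSpan ℝ s) p := by
  rw [mirror, dif_pos hs]

theorem mirror_sub_self_mem_direction_orthogonal (s : Set E) (p : E) :
    mirror s p - p ∈ (affineSpan ℝ s).directionᗮ := by
  rcases s.eq_empty_or_nonempty with rfl | hs
  · simp [mirror]
  have : Nonempty (affineSpan ℝ s) := ((affineSpan_nonempty ℝ).mpr hs).to_subtype
  have hproj := vsub_orthogonalProjection_mem_direction_orthogonal (affineSpan ℝ s) p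
  convert Submodule.smul_mem _ (-2 : ℝ) hproj using 1
  rw [mirror_eq_reflection hs, reflection_apply', vsub_eq_sub, vsub_eq_sub, vadd_eq_add]
  module

theorem mirror_sub_self_mem_direction {s t : Set E} (hst : s ⊆ t) {p : E}
    (hp : p ∈ affineSpan ℝ t) : mirror s p - p ∈ (affineSpan ℝ t).direction := by
  rcases s.eq_empty_or_nonempty with rfl | hs
  · simp [mirror]
  have : Nonempty (affineSpan ℝ s) := ((affineSpan_nonempty ℝ).mpr hs).to_subtype
  rw [mirror_eq_reflection hs]
  exact AffineSubspace.vsub_mem_direction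
    (reflection_mem_of_le_of_mem (affineSpan_mono ℝ hst) hp) hp

theorem mirror_ne_self {s : Set E} (hs : s.Nonempty) {p : E} (hp : p ∉ affineSpan ℝ s) :
    mirror s p ≠ p := by
  have : Nonempty (affineSpan ℝ s) := ((affineSpan_nonempty ℝ).mpr hs).to_subtype
  rwa [mirror_eq_reflection hs, Ne, reflection_eq_self_iff]

end Mirror

section Mirrored

variable {E : Type*} [NormedAddCommGroup E] [InnerProductSpace ℝ E] [FiniteDimensional ℝ E]
  {n : ℕ} (a : Fin (n + 1) → E)

theorem mirrored_sub_mem_direction_orthogonal (i : Fin (n - 1)) :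
    mirrored n a i - a (Fin.castLE (by omega) i) ∈
      (affineSpan ℝ (a '' {j | Fin.castLE (by omega) i < j})).directionᗮ :=
  mirror_sub_self_mem_direction_orthogonal _ _

theorem mirrored_sub_mem_direction {i j : Fin (n - 1)} (hij : i < j) :
    mirrored n a j - a (Fin.castLE (by omega) j) ∈
      (affineSpan ℝ (a '' {k | Fin.castLE (by omega) i < k})).direction := by
  have hij' : Fin.castLE (by omega) i < (Fin.castLE (by omega) j : Fin (n + 1)) := hij
  exact mirror_sub_self_mem_direction (Set.image_mono fun k (hk : _ < k) => hij'.trans hk)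
    (mem_affineSpan ℝ (Set.mem_image_of_mem a hij'))

theorem inner_mirrored_sub_mirrored_sub {i j : Fin (n - 1)} (hij : i < j) :
    ⟪mirrored n a i - a (Fin.castLE (by omega) i),
      mirrored n a j - a (Fin.castLE (by omega) j)⟫_ℝ = 0 :=
  Submodule.inner_left_of_mem_orthogonal (mirrored_sub_mem_direction a hij)
    (mirrored_sub_mem_direction_orthogonal a i)

theorem inner_mirrored_sub_sub {i : Fin (n - 1)} {j k : Fin (n + 1)}
    (hj : Fin.castLE (by omega) i < j) (hk : Fin.castLE (by omega) i < k) :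
    ⟪mirrored n a i - a (Fin.castLE (by omega) i), a j - a k⟫_ℝ = 0 :=
  Submodule.inner_left_of_mem_orthogonal
    (AffineSubspace.vsub_mem_direction (mem_affineSpan ℝ (Set.mem_image_of_mem a hj))
      (mem_affineSpan ℝ (Set.mem_image_of_mem a hk)))
    (mirrored_sub_mem_direction_orthogonal a i)

theorem mirrored_sub_ne_zero {a : Fin (n + 1) → E} (ha : AffineIndependent ℝ a)
    (i : Fin (n - 1)) :
    mirrored n a i - a (Fin.castLE (by omega) i) ≠ 0 := by
  have hlast : Fin.castLE (by omega) i < Fin.last n := by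
    rw [Fin.lt_def, Fin.val_castLE, Fin.val_last]
    omega
  exact sub_ne_zero.mpr (mirror_ne_self ⟨_, Set.mem_image_of_mem a hlast⟩ (by simp [ha]))

end Mirrored

section MirrorEdge

variable {E : Type*} [NormedAddCommGroup E] [InnerProductSpace ℝ E] [FiniteDimensional ℝ E]

noncomputable def mirrorEdge (n : ℕ) (a : Fin (n + 1) → E) : Option (Fin (n - 1)) → E
  | none => a (Fin.last n) - a ⟨n - 1, by omega⟩
  | some i => mirrored n a i - a (Fin.castLE (by omega) i)

theorem pairwise_inner_mirrorEdge_eq_zero (n : ℕ) (a : Fin (n + 1) → E) :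
    Pairwise fun o o' => ⟪mirrorEdge n a o, mirrorEdge n a o'⟫_ℝ = 0 := by
  have hlt : ∀ i : Fin (n - 1), Fin.castLE (by omega) i < Fin.last n ∧
      Fin.castLE (by omega) i < (⟨n - 1, by omega⟩ : Fin (n + 1)) := fun i => by
    simp only [Fin.lt_def, Fin.val_castLE, Fin.val_last]
    omega
  rintro (_ | i) (_ | j) hij
  · exact absurd rfl hij
  · rw [real_inner_comm]
    exact inner_mirrored_sub_sub a (hlt j).1 (hlt j).2
  · exact inner_mirrored_sub_sub a (hlt i).1 (hlt i).2
  · rcases lt_or_gt_of_ne fun h => hij (congrArg some h) with h | h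
    · exact inner_mirrored_sub_mirrored_sub a h
    · rw [real_inner_comm]
      exact inner_mirrored_sub_mirrored_sub a h

theorem mirrorEdge_ne_zero {n : ℕ} (hn : 0 < n) {a : Fin (n + 1) → E}
    (ha : AffineIndependent ℝ a) : ∀ o, mirrorEdge n a o ≠ 0
  | none => sub_ne_zero.mpr <| ha.injective.ne <| by
      simp only [Ne, Fin.ext_iff, Fin.val_last]
      omega
  | some i => mirrored_sub_ne_zero ha i

end MirrorEdge

/-- For any `f : E → ℝ`, any vector `g`, and affinely independent points `a 0, …, a n`
(`n ≥ 2`, `dim E = n`), the mean multi-difference quotient vector `r̄` satisfies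
`‖r̄ − g‖ ≤ Σᵢ |f āᵢ − f aᵢ − ⟪g, āᵢ − aᵢ⟫| / ‖āᵢ − aᵢ‖
  + |f a_{n+1} − f aₙ − ⟪g, a_{n+1} − aₙ⟫| / ‖a_{n+1} − aₙ‖` (0-based indexing). -/
theorem mean_ratio_sub_vector_norm_le
    {E : Type*} [NormedAddCommGroup E] [InnerProductSpace ℝ E] [FiniteDimensional ℝ E]
    (n : ℕ) (hn : 2 ≤ n) (hdim : Module.finrank ℝ E = n)
    (f : E → ℝ) (g : E) (a : Fin (n + 1) → E) (ha : AffineIndependent ℝ a) :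
    let v : Fin (n - 1) → E := fun i => mirrored n a i - a (Fin.castLE (by omega) i)
    let w : E := a (Fin.last n) - a ⟨n - 1, by omega⟩
    let rbar : E := (∑ i : Fin (n - 1),
        ((f (mirrored n a i) - f (a (Fin.castLE (by omega) i))) / ‖v i‖ ^ 2) • v i) +
      ((f (a (Fin.last n)) - f (a ⟨n - 1, by omega⟩)) / ‖w‖ ^ 2) • w
    ‖rbar - g‖ ≤
      (∑ i : Fin (n - 1),
        |f (mirrored n a i) - f (a (Fin.castLE (by omega) i)) - ⟪g, v i⟫_ℝ| / ‖v i‖) +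
      |f (a (Fin.last n)) - f (a ⟨n - 1, by omega⟩) - ⟪g, w⟫_ℝ| / ‖w‖ := by
  have key := norm_sum_div_sq_smul_sub_le (mirrorEdge_ne_zero (by omega) ha)
    (pairwise_inner_mirrorEdge_eq_zero n a)
    (by rw [Fintype.card_option, Fintype.card_fin, hdim]; omega)
    (fun o => o.elim (f (a (Fin.last n)) - f (a ⟨n - 1, by omega⟩))
      fun i => f (mirrored n a i) - f (a (Fin.castLE (by omega) i))) g
  simp only [Fintype.sum_option, Option.elim, mirrorEdge] at key
  rw [add_comm, add_comm (|_| / _)] at key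
  exact key
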